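/- arXiv:1507.00989 — 3 statements merged into one kernel-verified Lean document; each statement's English description precedes it below -/
import Mathlib

section
/- For a homeomorphism f of a compact metric space and any nonzero integer k, the shadowable points of f coincide with the shadowable points of f^k: Sh(f) = Sh(f^k). -/
/-!
Sampling a fine pseudo-orbit of `f` every `k` steps gives a pseudo-orbit of `f^k`, because over
a bounded number of steps a pseudo-orbit of a uniformly continuous map stays close to the true
orbit of any nearby point; the same finite-time estimate turns an `f^k`-orbit shadowing the samples
into an `f`-orbit shadowing the whole sequence. Conversely, filling the gaps of a pseudo-orbit
of `f^k` with `f`-orbit segments of length `k` gives a pseudo-orbit of `f`, and a shadowing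
`f`-orbit of it shadows the original one along multiples of `k`. Negative `k` reduce to positive
ones since reversing time turns pseudo-orbits of `f⁻¹` into pseudo-orbits of `f`.
-/

open Metric Set

/-- Natural iterates of a homeomorphism. -/
def hnpow {X : Type*} [TopologicalSpace X] (f : X ≃ₜ X) : ℕ → X ≃ₜ X
  | 0 => Homeomorph.refl X
  | n+1 => (hnpow f n).trans f

/-- Integer iterates `fⁿ`, `n ∈ ℤ`, of a homeomorphism. -/
def hpow {X : Type*} [TopologicalSpace X] (f : X ≃ₜ X) : ℤ → X ≃ₜ X
  | Int.ofNat n => hnpow f n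
  | Int.negSucc n => hnpow f.symm (n+1)

variable {X : Type*} [MetricSpace X]

/-- `ξ` is a `δ`-pseudo-orbit of `f`. -/
def IsPseudoOrbit (f : X ≃ₜ X) (δ : ℝ) (ξ : ℤ → X) : Prop :=
  ∀ n : ℤ, dist (f (ξ n)) (ξ (n+1)) ≤ δ

/-- `ξ` is `ε`-shadowed by the orbit of `y`. -/
def ShadowedBy (f : X ≃ₜ X) (ε : ℝ) (y : X) (ξ : ℤ → X) : Prop :=
  ∀ n : ℤ, dist (hpow f n y) (ξ n) ≤ ε

/-- `x` is a shadowable point of `f`. -/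
def ShadowablePoint (f : X ≃ₜ X) (x : X) : Prop :=
  ∀ ε > 0, ∃ δ > 0, ∀ ξ : ℤ → X, IsPseudoOrbit f δ ξ → ξ 0 = x →
    ∃ y, ShadowedBy f ε y ξ

/-- `f` has the pseudo-orbit tracing property. -/
def POTP (f : X ≃ₜ X) : Prop :=
  ∀ ε > 0, ∃ δ > 0, ∀ ξ : ℤ → X, IsPseudoOrbit f δ ξ → ∃ y, ShadowedBy f ε y ξ

/-- `x` is a nonwandering point of `f`. -/
def NonWandering (f : X ≃ₜ X) (x : X) : Prop :=
  ∀ U ∈ nhds x, ∃ k : ℕ, 0 < k ∧ ((hpow f (k : ℤ)) '' U ∩ U).Nonempty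

/-- `x` is a chain recurrent point of `f`. -/
def ChainRecurrent (f : X ≃ₜ X) (x : X) : Prop :=
  ∀ ρ > 0, ∃ n : ℕ, 0 < n ∧ ∃ c : ℕ → X, c 0 = x ∧ c n = x ∧
    ∀ i < n, dist (f (c i)) (c (i+1)) ≤ ρ

/-- `f` is distal: `inf_{n∈ℤ} d(fⁿ x, fⁿ y) > 0` for all distinct `x, y`. -/
def Distal (f : X ≃ₜ X) : Prop :=
  ∀ x y : X, x ≠ y → ∃ c > 0, ∀ n : ℤ, c ≤ dist (hpow f n x) (hpow f n y)

/-- `f` is minimal: every full orbit is dense. -/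
def MinimalHomeo (f : X ≃ₜ X) : Prop :=
  ∀ x : X, Dense (Set.range fun n : ℤ => hpow f n x)

/-- `f` is equicontinuous (uniformly, over all integer iterates). -/
def EquicontinuousHomeo (f : X ≃ₜ X) : Prop :=
  ∀ α > 0, ∃ β > 0, ∀ x y : X, dist x y ≤ β → ∀ n : ℤ, dist (hpow f n x) (hpow f n y) ≤ α

theorem hnpow_eq_pow {X : Type*} [TopologicalSpace X] (f : X ≃ₜ X) (n : ℕ) :
    hnpow f n = f ^ n := by
  induction n with
  | zero => rfl
  | succ n ih => rw [pow_succ', ← ih]; rfl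

theorem hpow_eq_zpow {X : Type*} [TopologicalSpace X] (f : X ≃ₜ X) (n : ℤ) :
    hpow f n = f ^ n := by
  cases n with
  | ofNat n => exact hnpow_eq_pow f n
  | negSucc n => rw [zpow_negSucc, ← inv_pow]; exact hnpow_eq_pow f⁻¹ (n + 1)

theorem Int.emod_add_one_cases {k : ℤ} (hk : 0 < k) (i : ℤ) :
    (i + 1) / k = i / k ∧ (i + 1) % k = i % k + 1 ∨
      (i + 1) / k = i / k + 1 ∧ (i + 1) % k = 0 ∧ i % k + 1 = k := by
  obtain ⟨hi, hr₀, hrk⟩ := (Int.ediv_emod_unique (a := i) hk).1 ⟨rfl, rfl⟩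
  rcases lt_or_eq_of_le (Int.add_one_le_of_lt hrk) with hlt | heq
  · exact .inl <| (Int.ediv_emod_unique hk).2 ⟨by linarith, by linarith, hlt⟩
  · obtain ⟨hq, hr⟩ := (Int.ediv_emod_unique (a := i + 1) (q := i / k + 1) (r := 0) hk).2
      ⟨by rw [zero_add, mul_add_one]; linarith, le_rfl, hk⟩
    exact .inr ⟨hq, hr, heq⟩

section Shadowing

variable {f : X ≃ₜ X} {x : X}

theorem IsPseudoOrbit.mono {δ δ' : ℝ} {ξ : ℤ → X} (h : IsPseudoOrbit f δ ξ) (hδ : δ ≤ δ') :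
    IsPseudoOrbit f δ' ξ :=
  fun n => (h n).trans hδ

theorem exists_forall_isPseudoOrbit_dist_pow_lt (hf : UniformContinuous f) (m : ℕ) {ε : ℝ}
    (hε : 0 < ε) : ∃ δ > 0, ∀ ξ, IsPseudoOrbit f δ ξ → ∀ y i, dist y (ξ i) ≤ δ →
      ∀ j ≤ m, dist ((f ^ j) y) (ξ (i + j)) < ε := by
  induction m generalizing ε with
  | zero =>
    refine ⟨ε / 2, half_pos hε, fun ξ _ y i hy j hj => ?_⟩
    obtain rfl : j = 0 := Nat.le_zero.mp hj
    simpa using hy.trans_lt (half_lt_self hε)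
  | succ m ih =>
    obtain ⟨η, hη, hfη⟩ := Metric.uniformContinuous_iff.mp hf (ε / 2) (half_pos hε)
    obtain ⟨δ, hδ, hδm⟩ := ih (lt_min hη hε)
    refine ⟨min δ (ε / 2), lt_min hδ (half_pos hε), fun ξ hξ y i hy j hj => ?_⟩
    have hξδ := hξ.mono (min_le_left _ _)
    have hyδ := hy.trans (min_le_left _ _)
    rcases Nat.le_succ_iff.mp hj with hj | rfl
    · exact (hδm ξ hξδ y i hyδ j hj).trans_le (min_le_right _ _)
    have hm := (hδm ξ hξδ y i hyδ m le_rfl).trans_le (min_le_left _ _)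
    calc dist ((f ^ (m + 1)) y) (ξ (i + ↑(m + 1)))
        ≤ dist (f ((f ^ m) y)) (f (ξ (i + m))) + dist (f (ξ (i + m))) (ξ (i + m + 1)) := by
          rw [pow_succ', Homeomorph.mul_apply, Nat.cast_succ, ← add_assoc]
          exact dist_triangle _ _ _
      _ < ε / 2 + ε / 2 := add_lt_add_of_lt_of_le (hfη hm) ((hξ _).trans (min_le_right _ _))
      _ = ε := add_halves ε

theorem shadowedBy_iff {ε : ℝ} {y : X} {ξ : ℤ → X} :
    ShadowedBy f ε y ξ ↔ ∀ n : ℤ, dist ((f ^ n) y) (ξ n) ≤ ε := by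
  simp only [ShadowedBy, hpow_eq_zpow]

theorem ShadowablePoint.inv (hf : UniformContinuous f) (h : ShadowablePoint f x) :
    ShadowablePoint f⁻¹ x := by
  intro ε hε
  obtain ⟨δ, hδ, hshadow⟩ := h ε hε
  obtain ⟨η, hη, hfη⟩ := Metric.uniformContinuous_iff.mp hf δ hδ
  refine ⟨η / 2, half_pos hη, fun ξ hξ hξ₀ => ?_⟩
  have hrev : IsPseudoOrbit f δ (fun n => ξ (-n)) := by
    intro n
    have := hfη ((hξ (-n - 1)).trans_lt (half_lt_self hη))
    rw [Homeomorph.inv_apply, Homeomorph.apply_symm_apply, sub_add_cancel] at this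
    rw [dist_comm]
    simpa only [neg_add', ← sub_eq_add_neg] using this.le
  obtain ⟨y, hy⟩ := hshadow _ hrev (by simpa using hξ₀)
  refine ⟨y, shadowedBy_iff.mpr fun n => ?_⟩
  simpa [inv_zpow'] using shadowedBy_iff.mp hy (-n)

theorem ShadowablePoint.pow {n : ℕ} (hn : 0 < n) (h : ShadowablePoint f x) :
    ShadowablePoint (f ^ n) x := by
  have hn' : (0 : ℤ) < n := Int.natCast_pos.mpr hn
  intro ε hε
  obtain ⟨δ, hδ, hshadow⟩ := h ε hε
  refine ⟨δ, hδ, fun ξ hξ hξ₀ => ?_⟩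
  set η : ℤ → X := fun i => (f ^ (i % n)) (ξ (i / n))
  have hη : IsPseudoOrbit f δ η := by
    intro i
    have hsucc : f ((f ^ (i % n)) (ξ (i / n))) = (f ^ (i % n + 1)) (ξ (i / n)) := by
      rw [add_comm, zpow_one_add, Homeomorph.mul_apply]
    rcases Int.emod_add_one_cases hn' i with ⟨hq, hr⟩ | ⟨hq, hr, hrn⟩
    · simp only [η, hsucc, hq, hr, dist_self, hδ.le]
    · simpa only [η, hsucc, hq, hr, hrn, zpow_zero, zpow_natCast, Homeomorph.one_apply]
        using hξ (i / n)
  obtain ⟨y, hy⟩ := hshadow η hη (by simpa [η] using hξ₀)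
  refine ⟨y, shadowedBy_iff.mpr fun q => ?_⟩
  simpa [η, Int.mul_ediv_cancel _ hn'.ne', ← zpow_natCast, ← zpow_mul, mul_comm]
    using shadowedBy_iff.mp hy (q * n)

theorem ShadowablePoint.of_pow (hf : UniformContinuous f) {n : ℕ} (hn : 0 < n)
    (h : ShadowablePoint (f ^ n) x) : ShadowablePoint f x := by
  have hn' : (0 : ℤ) < n := Int.natCast_pos.mpr hn
  intro ε hε
  obtain ⟨δ₀, hδ₀, htrack₀⟩ := exists_forall_isPseudoOrbit_dist_pow_lt hf n hε
  obtain ⟨δ₁, hδ₁, hshadow⟩ := h δ₀ hδ₀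
  obtain ⟨δ₂, hδ₂, htrack₂⟩ := exists_forall_isPseudoOrbit_dist_pow_lt hf n hδ₁
  refine ⟨min δ₀ δ₂, lt_min hδ₀ hδ₂, fun ξ hξ hξ₀ => ?_⟩
  have hζ : IsPseudoOrbit (f ^ n) δ₁ (fun q => ξ (q * n)) := fun q => by
    show dist _ (ξ ((q + 1) * n)) ≤ _
    rw [add_one_mul]
    exact (htrack₂ ξ (hξ.mono (min_le_right _ _)) _ _ (by simp [hδ₂.le]) n le_rfl).le
  obtain ⟨y, hy⟩ := hshadow _ hζ (by simpa using hξ₀)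
  refine ⟨y, shadowedBy_iff.mpr fun i => ?_⟩
  obtain ⟨hi, hr₀, hrn⟩ := (Int.ediv_emod_unique (a := i) hn').1 ⟨rfl, rfl⟩
  lift i % n to ℕ using hr₀ with r hr
  have hidx : i / n * n + r = i := by linarith [mul_comm (n : ℤ) (i / n)]
  have hsplit : (f ^ r) (((f ^ n) ^ (i / n)) y) = (f ^ i) y := by
    rw [← Homeomorph.mul_apply, ← zpow_natCast, ← zpow_natCast, ← zpow_mul, ← zpow_add, hi]
  have := htrack₀ ξ (hξ.mono (min_le_left _ _)) _ _ (shadowedBy_iff.mp hy (i / n)) r (by omega)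
  rw [hsplit, hidx] at this
  exact this.le

theorem shadowablePoint_pow_iff (hf : UniformContinuous f) {n : ℕ} (hn : 0 < n) :
    ShadowablePoint (f ^ n) x ↔ ShadowablePoint f x :=
  ⟨.of_pow hf hn, .pow hn⟩

theorem shadowablePoint_inv_iff [CompactSpace X] :
    ShadowablePoint f⁻¹ x ↔ ShadowablePoint f x := by
  have uc (g : X ≃ₜ X) := CompactSpace.uniformContinuous_of_continuous g.continuous
  exact ⟨fun h => inv_inv f ▸ h.inv (uc _), fun h => h.inv (uc f)⟩

end Shadowing

theorem stmt7 [CompactSpace X] (f : X ≃ₜ X) (k : ℤ) (hk : k ≠ 0) :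
    {x | ShadowablePoint f x} = {x | ShadowablePoint (hpow f k) x} := by
  have hf := CompactSpace.uniformContinuous_of_continuous f.continuous
  ext x
  obtain ⟨n, rfl | rfl⟩ := Int.eq_nat_or_neg k <;>
  · have hn : 0 < n := by omega
    simp only [mem_ofPred_eq, hpow_eq_zpow, zpow_neg, zpow_natCast, shadowablePoint_inv_iff,
      shadowablePoint_pow_iff hf hn]
end

section
/- Let f be a homeomorphism of a compact metric space. If z is both nonwandering and shadowable, then for every ε>0 there exist k∈ℕ⁺ and y∈X such that d(f^{pk}(y), z) ≤ ε for every p∈ℤ. -/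
/-!
A nonwandering point `z` is chain recurrent: for every `δ > 0`, a point `u` near `z` with `fᵏ u`
near `z` gives the closed `δ`-chain `z, f u, …, fᵏ⁻¹ u, z`. Repeated periodically, this chain is a
`δ`-pseudo-orbit through `z` which sits at `z` at every multiple of `k`, so any point shadowing
it returns `ε`-close to `z` along the whole orbit of `fᵏ`.
-/

open Metric Set

variable {X : Type*} [MetricSpace X]

lemma hnpow_succ_apply {Y : Type*} [TopologicalSpace Y] (f : Y ≃ₜ Y) (n : ℕ) (x : Y) :
    hnpow f (n + 1) x = f (hnpow f n x) := rfl

lemma hpow_natCast {Y : Type*} [TopologicalSpace Y] (f : Y ≃ₜ Y) (n : ℕ) :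
    hpow f n = hnpow f n := rfl

def periodicExtension {α : Type*} (k : ℕ) (c : ℕ → α) (n : ℤ) : α :=
  c (n % k).toNat

lemma periodicExtension_mul_self {α : Type*} (k : ℕ) (c : ℕ → α) (p : ℤ) :
    periodicExtension k c (p * k) = c 0 := by
  simp [periodicExtension]

lemma periodicExtension_add_one {α : Type*} {k : ℕ} (hk : 0 < k) (c : ℕ → α) (n : ℤ) :
    periodicExtension k c (n + 1) = c (((n % k).toNat + 1) % k) := by
  obtain ⟨m, hm⟩ : ∃ m : ℕ, n % k = m :=
    ⟨_, (Int.toNat_of_nonneg (Int.emod_nonneg n (by omega))).symm⟩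
  unfold periodicExtension
  rw [← Int.emod_add_emod, hm, Int.toNat_natCast]
  norm_cast

lemma isPseudoOrbit_periodicExtension {f : X ≃ₜ X} {δ : ℝ} {k : ℕ} (hk : 0 < k)
    {c : ℕ → X} (hck : c k = c 0) (hc : ∀ i < k, dist (f (c i)) (c (i + 1)) ≤ δ) :
    IsPseudoOrbit f δ (periodicExtension k c) := by
  intro n
  have hr : (n % k).toNat < k := by
    have := Int.emod_lt_of_pos n (by omega : (0 : ℤ) < k); omega
  rw [periodicExtension_add_one hk, periodicExtension]
  generalize (n % k).toNat = r at hr ⊢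
  rcases (Nat.succ_le_of_lt hr).lt_or_eq with hlt | heq
  · rw [Nat.mod_eq_of_lt hlt]
    exact hc r hr
  · rw [← Nat.succ_eq_add_one, heq, Nat.mod_self, ← hck, ← heq]
    exact hc r hr

theorem NonWandering.chainRecurrent {f : X ≃ₜ X} {z : X} (hz : NonWandering f z) :
    ChainRecurrent f z := by
  intro ρ hρ
  obtain ⟨η₀, hη₀, hcont⟩ := Metric.continuous_iff.mp f.continuous z (ρ / 2) (by linarith)
  set η := min (ρ / 2) η₀
  obtain ⟨k, hk, _, ⟨u, hu, rfl⟩, hku⟩ :=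
    hz (ball z η) (ball_mem_nhds z (lt_min (by linarith) hη₀))
  rw [mem_ball] at hu hku
  rw [hpow_natCast] at hku
  let c : ℕ → X := fun i => if i = 0 ∨ i = k then z else hnpow f i u
  have hfirst : ∀ i < k, dist (f (c i)) (hnpow f (i + 1) u) ≤ ρ / 2 := by
    intro i hi
    by_cases hi0 : i = 0
    · subst hi0
      simpa [c, dist_comm, hnpow_succ_apply, hnpow] using
        (hcont u (hu.trans_le (min_le_right _ _))).le
    · have hci : c i = hnpow f i u := if_neg (by omega)
      rw [hci, ← hnpow_succ_apply, dist_self]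
      positivity
  have hlast : ∀ i < k, dist (hnpow f (i + 1) u) (c (i + 1)) ≤ ρ / 2 := by
    intro i hi
    by_cases hik : i + 1 = k
    · simpa [c, hik] using hku.le.trans (min_le_left _ _)
    · have hci : c (i + 1) = hnpow f (i + 1) u := if_neg (by omega)
      rw [hci, dist_self]
      positivity
  refine ⟨k, hk, c, by simp [c], by simp [c], fun i hi => ?_⟩
  calc dist (f (c i)) (c (i + 1))
      ≤ dist (f (c i)) (hnpow f (i + 1) u) + dist (hnpow f (i + 1) u) (c (i + 1)) :=
        dist_triangle _ _ _
    _ ≤ ρ := by linarith [hfirst i hi, hlast i hi]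

theorem stmt8_general (f : X ≃ₜ X) (z : X)
    (h1 : NonWandering f z) (h2 : ShadowablePoint f z) :
    ∀ ε > 0, ∃ k : ℕ, 0 < k ∧ ∃ y : X, ∀ p : ℤ, dist (hpow f (p * k) y) z ≤ ε := by
  intro ε hε
  obtain ⟨δ, hδ, hshadow⟩ := h2 ε hε
  obtain ⟨k, hk, c, hc0, hck, hc⟩ := h1.chainRecurrent δ hδ
  obtain ⟨y, hy⟩ := hshadow (periodicExtension k c)
    (isPseudoOrbit_periodicExtension hk (hck.trans hc0.symm) hc)
    (by simp [periodicExtension, hc0])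
  refine ⟨k, hk, y, fun p => ?_⟩
  simpa [periodicExtension_mul_self, hc0] using hy (p * k)

theorem stmt8 [CompactSpace X] (f : X ≃ₜ X) (z : X)
    (h1 : NonWandering f z) (h2 : ShadowablePoint f z) :
    ∀ ε > 0, ∃ k : ℕ, 0 < k ∧ ∃ y : X, ∀ p : ℤ, dist (hpow f (p * k) y) z ≤ ε :=
  stmt8_general f z h1 h2
end

section
/- If f is an equicontinuous homeomorphism of a compact metric space X and p is a point whose connected component in X is {p}, then p is shadowable. -/
open Metric Set

variable {X : Type*} [MetricSpace X]

lemma hnpow_succ (f : X ≃ₜ X) (n : ℕ) (x : X) : hnpow f (n+1) x = f (hnpow f n x) := rfl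

lemma hnpow_comm (f : X ≃ₜ X) (n : ℕ) (x : X) : hnpow f n (f x) = f (hnpow f n x) := by
  induction n with
  | zero => rfl
  | succ n ih => rw [hnpow_succ, hnpow_succ, ih]

lemma hnpow_succ' (f : X ≃ₜ X) (n : ℕ) (x : X) : hnpow f (n+1) x = hnpow f n (f x) := by
  rw [hnpow_succ, hnpow_comm]

lemma hnpow_symm_cancel (f : X ≃ₜ X) (n : ℕ) (x : X) : hnpow f n (hnpow f.symm n x) = x := by
  induction n with
  | zero => rfl
  | succ n ih =>
      rw [hnpow_succ' f, hnpow_succ f.symm, Homeomorph.apply_symm_apply, ih]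

lemma hnpow_symm_cancel' (f : X ≃ₜ X) (n : ℕ) (x : X) : hnpow f.symm n (hnpow f n x) = x := by
  have := hnpow_symm_cancel f.symm n x
  rwa [Homeomorph.symm_symm] at this

lemma hpow_zero (f : X ≃ₜ X) (x : X) : hpow f 0 x = x := rfl

lemma hpow_succ (f : X ≃ₜ X) (m : ℤ) (x : X) : hpow f (m+1) x = hpow f m (f x) := by
  cases m with
  | ofNat n =>
      show hnpow f (n+1) x = hnpow f n (f x)
      exact hnpow_succ' f n x
  | negSucc n =>
      cases n with
      | zero =>
          show x = hnpow f.symm 1 (f x)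
          show x = f.symm (f x)
          rw [Homeomorph.symm_apply_apply]
      | succ n =>
          show hnpow f.symm (n+1) x = hnpow f.symm (n+2) (f x)
          rw [hnpow_succ' f.symm (n+1) (f x), Homeomorph.symm_apply_apply]

lemma hpow_neg_cancel (f : X ≃ₜ X) (m : ℤ) (x : X) : hpow f m (hpow f (-m) x) = x := by
  cases m with
  | ofNat n =>
      cases n with
      | zero => rfl
      | succ n =>
          show hnpow f (n+1) (hnpow f.symm (n+1) x) = x
          exact hnpow_symm_cancel f (n+1) x
  | negSucc n =>
      show hnpow f.symm (n+1) (hnpow f (n+1) x) = x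
      exact hnpow_symm_cancel' f (n+1) x

lemma exists_clopen_nhd [CompactSpace X] {p : X} (hp : connectedComponent p = {p})
    {U : Set X} (hU : IsOpen U) (hpU : p ∈ U) :
    ∃ V : Set X, IsClopen V ∧ p ∈ V ∧ V ⊆ U := by
  rw [connectedComponent_eq_iInter_isClopen] at hp
  let N := { s : Set X // IsClopen s ∧ p ∈ s }
  haveI : Nonempty N := ⟨⟨univ, isClopen_univ, mem_univ p⟩⟩
  have hNcl : ∀ s : N, IsClosed s.val := fun s => s.2.1.1
  have hdir : Directed (· ⊇ ·) fun s : N => s.val := by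
    rintro ⟨s, hs, hps⟩ ⟨t, ht, hpt⟩
    exact ⟨⟨s ∩ t, hs.inter ht, ⟨hps, hpt⟩⟩, inter_subset_left, inter_subset_right⟩
  have h_nhd : ∀ y ∈ ⋂ s : N, s.val, U ∈ nhds y := by
    intro y hy
    have : y ∈ ({p} : Set X) := hp ▸ hy
    rw [mem_singleton_iff] at this
    subst this
    exact hU.mem_nhds hpU
  obtain ⟨s, hs⟩ := exists_subset_nhds_of_compactSpace hdir hNcl h_nhd
  exact ⟨s.val, s.2.1, s.2.2, hs⟩

theorem stmt14 [CompactSpace X] (f : X ≃ₜ X) (h : EquicontinuousHomeo f)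
    (p : X) (hp : connectedComponent p = {p}) : ShadowablePoint f p := by
  intro ε hε
  obtain ⟨β, hβ, hβ'⟩ := h ε hε
  obtain ⟨A, hA, hpA, hAball⟩ := exists_clopen_nhd hp isOpen_ball (mem_ball_self (by linarith))
  have hAcompact : IsCompact A := hA.1.isCompact
  obtain ⟨γ, hγ, hγ'⟩ := hAcompact.exists_thickening_subset_open hA.2 (subset_refl A)
  obtain ⟨δ, hδ, hδ'⟩ := h (γ/2) (by linarith)
  refine ⟨δ, hδ, ?_⟩
  intro ξ hξ hξ0
  -- the "rectified" sequence
  set η : ℤ → X := fun n => hpow f (-n) (ξ n) with hη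
  have hstep : ∀ m : ℤ, dist (η m) (η (m+1)) ≤ γ/2 := by
    intro m
    have h1 : η m = hpow f (-(m+1)) (f (ξ m)) := by
      have : (-(m+1) : ℤ) + 1 = -m := by ring
      rw [hη]
      simp only
      rw [← this, hpow_succ]
    rw [h1]
    exact hδ' (f (ξ m)) (ξ (m+1)) (hξ m) (-(m+1))
  have hmem : ∀ m : ℤ, η m ∈ A := by
    have h0 : η 0 ∈ A := by
      have : η 0 = p := by rw [hη]; simp only [neg_zero]; rw [hpow_zero, hξ0]
      rw [this]; exact hpA
    have key : ∀ a b : ℤ, dist (η a) (η b) ≤ γ/2 → η a ∈ A → η b ∈ A := by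
      intro a b hd ha
      apply hγ'
      rw [mem_thickening_iff]
      exact ⟨η a, ha, by rw [dist_comm]; linarith⟩
    intro m
    induction m using Int.induction_on with
    | zero => exact h0
    | succ n ih => exact key n (n+1) (hstep n) ih
    | pred n ih =>
        refine key (-n) (-n-1) ?_ ih
        have := hstep (-n-1)
        rw [dist_comm]
        simpa using this
  refine ⟨p, ?_⟩
  intro n
  have hη_dist : dist p (η n) ≤ β := by
    have := hAball (hmem n)
    rw [mem_ball, dist_comm] at this
    linarith
  have := hβ' p (η n) hη_dist n
  have hback : hpow f n (η n) = ξ n := hpow_neg_cancel f n (ξ n)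
  rwa [hback] at this
end
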